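/- arXiv:1303.1598 — 7 statements merged into one kernel-verified Lean document; each statement's English description precedes it below -/
import Mathlib

section
/- Let f be a real-valued convex function on real symmetric n×n matrices, A₁,…,A_m symmetric matrices, x₀ ∈ ℝⁿ, X₀ = x₀x₀ᵀ, bᵢ = ⟨X₀, Aᵢ⟩, and suppose X₀ minimizes f over the feasible set {X ⪰ 0, ⟨X, Aᵢ⟩ = bᵢ ∀i}. If there is no nonzero matrix A in the span of {A₁,…,A_m} with A ⪰ 0 and ⟨A, X₀⟩ = 0, then there exists a dual certificate at X₀: there exist λ ∈ ℝ^m and a symmetric Q with Q ⪯ 0, ⟨Q, X₀⟩ = 0, and f(X) ≥ f(X₀) − ⟨Σᵢ λᵢAᵢ + Q, X − X₀⟩ for all symmetric X. -/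
/-!
Consider the convex set of values `(A(X), X - Z, r)` with `X` symmetric, `Z ⪰ 0` and
`f X < r`, where `A(X) = (⟨X, Aᵢ⟩)ᵢ`. Optimality of `X₀` says exactly that the point
`(A(X₀), 0, f X₀)` lies outside it, so in finite dimension a linear functional separates the
point properly from the set. Reading off its three components gives Fritz John multipliers:
a weight `μ ≥ 0` on the objective, `c` on the affine constraints and `P ⪰ 0` with `⟨P, X₀⟩ = 0`,
with `⟨∑ cᵢAᵢ + P, X - X₀⟩ ≤ μ (f X - f X₀)` on symmetric matrices. If `μ = 0` this forces
`∑ cᵢAᵢ = -P`, a PSD matrix of the span orthogonal to `X₀`; by hypothesis it vanishes, which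
contradicts properness of the separation. So `μ > 0`, and dividing by `μ` gives the certificate.
-/

open Matrix

theorem Convex.exists_dual_ne_zero_nonpos_of_zero_notMem {E : Type*} [NormedAddCommGroup E]
    [NormedSpace ℝ E] [FiniteDimensional ℝ E] [Nontrivial E] {D : Set E} (hD : Convex ℝ D)
    (h0 : (0 : E) ∉ D) : ∃ g : Module.Dual ℝ E, g ≠ 0 ∧ ∀ x ∈ D, g x ≤ 0 := by
  by_cases hint : (interior D).Nonempty
  · obtain ⟨g, hg0, hg⟩ :=
      geometric_hahn_banach_of_nonempty_interior_point hD (fun h => h0 (interior_subset h)) hint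
    exact ⟨g, fun h => hg0 (ContinuousLinearMap.coe_injective (by simpa using h)),
      fun x hx => by simpa using hg x hx⟩
  rcases D.eq_empty_or_nonempty with rfl | ⟨p, hp⟩
  · obtain ⟨g, hg0, -⟩ := (⊥ : Submodule ℝ E).exists_le_ker_of_lt_top bot_lt_top
    exact ⟨g, hg0, by simp⟩
  -- `D` lies in a proper affine subspace, on which a functional killing its direction is constant.
  have hdir : (affineSpan ℝ D).direction < ⊤ := by
    rw [lt_top_iff_ne_top, Ne, AffineSubspace.direction_eq_top_iff_of_nonempty
      ((affineSpan_nonempty ℝ).2 ⟨p, hp⟩), ← hD.interior_nonempty_iff_affineSpan_eq_top]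
    exact hint
  obtain ⟨h, hh0, hker⟩ := (affineSpan ℝ D).direction.exists_le_ker_of_lt_top hdir
  have hconst : ∀ x ∈ D, h x = h p := fun x hx => by
    simpa [sub_eq_zero] using
      hker (AffineSubspace.vsub_mem_direction (subset_affineSpan ℝ D hx) (subset_affineSpan ℝ D hp))
  rcases le_total (h p) 0 with hp0 | hp0
  · exact ⟨h, hh0, fun x hx => (hconst x hx).trans_le hp0⟩
  · exact ⟨-h, neg_ne_zero.2 hh0, fun x hx => by simp [hconst x hx, hp0]⟩

theorem Convex.exists_dual_nonpos_exists_neg_of_zero_notMem {E : Type*} [AddCommGroup E]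
    [Module ℝ E] [FiniteDimensional ℝ E] {D : Set E} (hD : Convex ℝ D) (hne : D.Nonempty)
    (h0 : (0 : E) ∉ D) : ∃ g : Module.Dual ℝ E, (∀ x ∈ D, g x ≤ 0) ∧ ∃ x ∈ D, g x < 0 := by
  -- Separate inside `span D`, identified with `ℝᵈ` by `L`, then extend by a left inverse of `L`.
  set V := Submodule.span ℝ D
  set e := (Module.finBasis ℝ V).equivFun
  set L : (Fin (Module.finrank ℝ V) → ℝ) →ₗ[ℝ] E := V.subtype ∘ₗ e.symm.toLinearMap
  have hL : ∀ x (hx : x ∈ V), L (e ⟨x, hx⟩) = x := fun x hx => by simp [L]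
  have hLV : ∀ y, L y ∈ V := fun y => (e.symm y).2
  obtain ⟨p, hp⟩ := hne
  have : Nontrivial (Fin (Module.finrank ℝ V) → ℝ) := by
    refine ⟨e ⟨p, Submodule.subset_span hp⟩, 0, fun h => h0 ?_⟩
    rwa [← hL p (Submodule.subset_span hp), h, map_zero] at hp
  obtain ⟨g', hg'0, hg'⟩ :=
    (hD.linear_preimage L).exists_dual_ne_zero_nonpos_of_zero_notMem (by simpa using h0)
  obtain ⟨R, hR⟩ := L.exists_leftInverse_of_injective
    (LinearMap.ker_eq_bot.2 (V.injective_subtype.comp e.symm.injective))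
  have hRL : ∀ y, g' (R (L y)) = g' y := fun y => by
    rw [← LinearMap.comp_apply R L, hR, LinearMap.id_apply]
  have hle : ∀ x ∈ D, g' (R x) ≤ 0 := fun x hx => by
    rw [← hL x (Submodule.subset_span hx), hRL]
    exact hg' _ (by rwa [Set.mem_preimage, hL])
  refine ⟨g' ∘ₗ R, hle, ?_⟩
  by_contra! hpos
  have hV : V ≤ LinearMap.ker (g' ∘ₗ R) :=
    Submodule.span_le.2 fun x hx => le_antisymm (hle x hx) (hpos x hx)
  exact hg'0 (LinearMap.ext fun y => by simpa [hRL] using hV (hLV y))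

theorem Convex.exists_dual_le_exists_lt_of_notMem {E : Type*} [AddCommGroup E] [Module ℝ E]
    [FiniteDimensional ℝ E] {D : Set E} {x : E} (hD : Convex ℝ D) (hne : D.Nonempty)
    (hx : x ∉ D) : ∃ g : Module.Dual ℝ E, (∀ y ∈ D, g y ≤ g x) ∧ ∃ y ∈ D, g y < g x := by
  obtain ⟨g, hle, -, ⟨y, hy, rfl⟩, hlt⟩ :=
    (hD.translate (-x)).exists_dual_nonpos_exists_neg_of_zero_notMem (hne.image _)
      (by simpa [neg_add_eq_zero, eq_comm] using hx)
  refine ⟨g, fun z hz => ?_, y, hy, ?_⟩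
  · simpa using hle _ ⟨z, hz, rfl⟩
  · simpa using hlt

theorem add_mul_nonpos_of_forall_lt {a b c : ℝ} (h : ∀ r, a < r → b + c * r ≤ 0) :
    b + c * a ≤ 0 :=
  le_of_tendsto (((continuous_const.add (continuous_const.mul continuous_id)).tendsto a).mono_left
    nhdsWithin_le_nhds) (eventually_nhdsWithin_of_forall (s := Set.Ioi a) h)

section

variable {ι n : Type*}

namespace Matrix

theorem convex_setOf_posSemidef : Convex ℝ {Z : Matrix n n ℝ | Z.PosSemidef} :=
  fun _ hX _ hY _ _ ha hb _ => (hX.smul ha).add (hY.smul hb)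

theorem PosSemidef.isSymm {Z : Matrix n n ℝ} (hZ : Z.PosSemidef) : Z.IsSymm :=
  isHermitian_iff_isSymm.1 hZ.isHermitian

variable [Fintype n]

theorem exists_isSymm_trace_mul_eq (ℓ : Module.Dual ℝ (Matrix n n ℝ)) :
    ∃ P : Matrix n n ℝ, P.IsSymm ∧ ∀ M : Matrix n n ℝ, M.IsSymm → ℓ M = (P * M).trace := by
  classical
  set P₀ : Matrix n n ℝ := of fun i j => ℓ (single j i 1)
  have hP₀ : ∀ M, ℓ M = (P₀ * M).trace := fun M => by
    conv_lhs => rw [matrix_eq_sum_single M]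
    simp only [map_sum, trace, diag_apply, mul_apply, P₀, of_apply]
    rw [Finset.sum_comm]
    refine Finset.sum_congr rfl fun i _ => Finset.sum_congr rfl fun j _ => ?_
    rw [show single j i (M j i) = M j i • single j i 1 by rw [smul_single, smul_eq_mul, mul_one],
      map_smul, smul_eq_mul, mul_comm]
  refine ⟨(2 : ℝ)⁻¹ • (P₀ + P₀ᵀ), ?_, fun M hM => ?_⟩
  · simp [IsSymm, add_comm]
  · have hT : (P₀ᵀ * M).trace = (P₀ * M).trace := by
      rw [← trace_transpose, transpose_mul, transpose_transpose, hM.eq, trace_mul_comm]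
    rw [smul_mul_assoc, trace_smul, add_mul, trace_add, hT, hP₀, smul_eq_mul]
    ring

theorem PosSemidef.of_isSymm_of_trace_mul_nonneg {B : Matrix n n ℝ} (hB : B.IsSymm)
    (h : ∀ Z : Matrix n n ℝ, Z.PosSemidef → 0 ≤ (B * Z).trace) : B.PosSemidef := by
  refine .of_dotProduct_mulVec_nonneg (isHermitian_iff_isSymm.2 hB) fun v => ?_
  have := h _ (posSemidef_vecMulVec_self_star v)
  rwa [mul_vecMulVec, trace_vecMulVec, dotProduct_comm] at this

theorem IsSymm.eq_zero_of_trace_mul_nonpos {B : Matrix n n ℝ} (hB : B.IsSymm)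
    (h : ∀ S : Matrix n n ℝ, S.IsSymm → (B * S).trace ≤ 0) : B = 0 := by
  have h₁ := h B hB
  have h₂ := h (-B) hB.neg
  rw [mul_neg, trace_neg] at h₂
  rw [← trace_conjTranspose_mul_self_eq_zero_iff, conjTranspose_eq_transpose_of_trivial, hB.eq]
  linarith

theorem IsSymm.posSemidef_and_trace_mul_eq_zero_of_isMinOn {P X₀ : Matrix n n ℝ} (hP : P.IsSymm)
    (hX₀ : X₀.PosSemidef) (h : IsMinOn (fun Z => (P * Z).trace) {Z | Z.PosSemidef} X₀) :
    P.PosSemidef ∧ (P * X₀).trace = 0 := by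
  have h₀ : (P * X₀).trace ≤ 0 := by simpa using h (PosSemidef.zero : (0 : Matrix n n ℝ).PosSemidef)
  have h₂ : (P * X₀).trace ≤ 2 * (P * X₀).trace := by
    simpa using h (hX₀.smul (zero_le_two : (0 : ℝ) ≤ 2))
  have hPX₀ : (P * X₀).trace = 0 := by linarith
  exact ⟨.of_isSymm_of_trace_mul_nonneg hP fun Z hZ => hPX₀ ▸ h hZ, hPX₀⟩

variable [Fintype ι]

theorem dotProduct_trace_mul (A : ι → Matrix n n ℝ) (c : ι → ℝ) (X : Matrix n n ℝ) :
    c ⬝ᵥ (fun i => (X * A i).trace) = ((∑ i, c i • A i) * X).trace := by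
  simp only [dotProduct, Finset.sum_mul, trace_sum, smul_mul_assoc, trace_smul, smul_eq_mul,
    trace_mul_comm X]

theorem exists_dotProduct_add_trace_mul_add_mul
    (g : Module.Dual ℝ ((ι → ℝ) × Matrix n n ℝ × ℝ)) :
    ∃ (c : ι → ℝ) (P : Matrix n n ℝ) (ν : ℝ), P.IsSymm ∧ ∀ y M r, M.IsSymm →
      g (y, M, r) = c ⬝ᵥ y + (P * M).trace + ν * r := by
  classical
  obtain ⟨P, hP, hPM⟩ := exists_isSymm_trace_mul_eq (g ∘ₗ .inr ℝ _ _ ∘ₗ .inl ℝ _ _)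
  set gy : Module.Dual ℝ (ι → ℝ) := g ∘ₗ .inl ℝ _ _
  refine ⟨(dotProductEquiv ℝ ι).symm gy, P, g (0, 0, 1), hP, fun y M r hM => ?_⟩
  have hsplit : ((y, M, r) : (ι → ℝ) × Matrix n n ℝ × ℝ) =
      (y, 0) + ((0, M, 0) + r • (0, 0, 1)) := by
    simp
  rw [hsplit, map_add, map_add, map_smul, ← hPM M hM, smul_eq_mul,
    ← dotProductEquiv_apply_apply ℝ, LinearEquiv.apply_symm_apply]
  simp only [gy, LinearMap.comp_apply, LinearMap.inl_apply, LinearMap.inr_apply]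
  ring

end Matrix

def sdpImage [Fintype n] (f : Matrix n n ℝ → ℝ) (A : ι → Matrix n n ℝ) :
    Set ((ι → ℝ) × Matrix n n ℝ × ℝ) :=
  {p | ∃ X Z r, X.IsSymm ∧ Z.PosSemidef ∧ f X < r ∧ p = (fun i => (X * A i).trace, X - Z, r)}

theorem convex_sdpImage [Fintype n] {f : Matrix n n ℝ → ℝ} (A : ι → Matrix n n ℝ)
    (hf : ConvexOn ℝ {X : Matrix n n ℝ | X.IsSymm} f) : Convex ℝ (sdpImage f A) := by
  rintro _ ⟨X₁, Z₁, r₁, hX₁, hZ₁, hr₁, rfl⟩ _ ⟨X₂, Z₂, r₂, hX₂, hZ₂, hr₂, rfl⟩ a b ha hb hab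
  obtain ⟨hX, hr⟩ := hf.convex_strict_epigraph (x := (X₁, r₁)) (y := (X₂, r₂)) ⟨hX₁, hr₁⟩
    ⟨hX₂, hr₂⟩ ha hb hab
  refine ⟨a • X₁ + b • X₂, a • Z₁ + b • Z₂, a * r₁ + b * r₂, hX,
    convex_setOf_posSemidef hZ₁ hZ₂ ha hb hab, by simpa using hr, ?_⟩
  ext <;> simp [add_mul, smul_sub]
  abel

theorem notMem_sdpImage [Fintype n] {f : Matrix n n ℝ → ℝ} {A : ι → Matrix n n ℝ}
    {X₀ : Matrix n n ℝ}
    (hmin : ∀ X : Matrix n n ℝ, X.PosSemidef →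
      (∀ i, (X * A i).trace = (X₀ * A i).trace) → f X₀ ≤ f X) :
    ((fun i => (X₀ * A i).trace, 0, f X₀) : (ι → ℝ) × Matrix n n ℝ × ℝ) ∉ sdpImage f A := by
  rintro ⟨X, Z, r, -, hZ, hr, heq⟩
  simp only [Prod.mk.injEq] at heq
  obtain ⟨hA, hXZ, rfl⟩ := heq
  obtain rfl : X = Z := sub_eq_zero.1 hXZ.symm
  exact (hmin X hZ fun i => (congrFun hA i).symm).not_gt hr

theorem exists_fritzJohn_multipliers [Fintype ι] [Fintype n] {f : Matrix n n ℝ → ℝ}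
    {A : ι → Matrix n n ℝ} {X₀ : Matrix n n ℝ}
    (hf : ConvexOn ℝ {X : Matrix n n ℝ | X.IsSymm} f) (hX₀ : X₀.PosSemidef)
    (hmin : ∀ X : Matrix n n ℝ, X.PosSemidef →
      (∀ i, (X * A i).trace = (X₀ * A i).trace) → f X₀ ≤ f X) :
    ∃ (μ : ℝ) (c : ι → ℝ) (P : Matrix n n ℝ), 0 ≤ μ ∧ P.PosSemidef ∧ (P * X₀).trace = 0 ∧
      ¬(μ = 0 ∧ ∑ i, c i • A i = 0 ∧ P = 0) ∧
      ∀ X : Matrix n n ℝ, X.IsSymm →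
        ((∑ i, c i • A i + P) * (X - X₀)).trace ≤ μ * (f X - f X₀) := by
  obtain ⟨g, hle, _, ⟨X₁, Z₁, r₁, hX₁, hZ₁, hr₁, rfl⟩, hlt⟩ :=
    (convex_sdpImage A hf).exists_dual_le_exists_lt_of_notMem
      ⟨_, X₀, X₀, f X₀ + 1, hX₀.isSymm, hX₀, lt_add_one _, rfl⟩ (notMem_sdpImage hmin)
  obtain ⟨c, P, ν, hP, hg⟩ := exists_dotProduct_add_trace_mul_add_mul g
  set B := ∑ i, c i • A i
  have hgap : ∀ X Z r, X.IsSymm → Z.PosSemidef →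
      g (fun i => (X * A i).trace, X - Z, r) - g (fun i => (X₀ * A i).trace, 0, f X₀) =
        (B * (X - X₀)).trace + (P * (X - Z)).trace + ν * (r - f X₀) := by
    intro X Z r hX hZ
    rw [hg _ _ _ (hX.sub hZ.isSymm), hg _ _ _ isSymm_zero, dotProduct_trace_mul,
      dotProduct_trace_mul]
    simp only [B, mul_sub, trace_sub, mul_zero, trace_zero]
    ring
  have hgap_nonpos : ∀ X Z r, X.IsSymm → Z.PosSemidef → f X < r →
      (B * (X - X₀)).trace + (P * (X - Z)).trace + ν * (r - f X₀) ≤ 0 := by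
    intro X Z r hX hZ hr
    rw [← hgap X Z r hX hZ, sub_nonpos]
    exact hle _ ⟨X, Z, r, hX, hZ, hr, rfl⟩
  have hν : ν ≤ 0 := by simpa using hgap_nonpos X₀ X₀ (f X₀ + 1) hX₀.isSymm hX₀ (lt_add_one _)
  have hlagr : ∀ X Z, X.IsSymm → Z.PosSemidef →
      (B * (X - X₀)).trace + (P * (X - Z)).trace ≤ -ν * (f X - f X₀) := by
    intro X Z hX hZ
    have := add_mul_nonpos_of_forall_lt
      (b := (B * (X - X₀)).trace + (P * (X - Z)).trace - ν * f X₀) (c := ν) fun r hr => by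
        linarith [hgap_nonpos X Z r hX hZ hr]
    linarith
  obtain ⟨hPpsd, hPX₀⟩ := hP.posSemidef_and_trace_mul_eq_zero_of_isMinOn hX₀ fun Z hZ => by
    simpa [mul_sub] using hlagr X₀ Z hX₀.isSymm hZ
  refine ⟨-ν, c, P, neg_nonneg.2 hν, hPpsd, hPX₀, ?_, ?_⟩
  · rintro ⟨hν0, hB, rfl⟩
    have := hgap X₁ Z₁ r₁ hX₁ hZ₁
    rw [neg_eq_zero.1 hν0, show B = 0 from hB] at this
    simp only [zero_mul, trace_zero, zero_add] at this
    linarith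
  · intro X hX
    simpa [add_mul] using hlagr X X₀ hX hX₀

theorem sum_smul_eq_zero_and_eq_zero_of_no_orthogonal_psd [Fintype ι] [Fintype n]
    {A : ι → Matrix n n ℝ} {X₀ P : Matrix n n ℝ} {c : ι → ℝ} (hA : ∀ i, (A i).IsSymm)
    (hX₀ : X₀.IsSymm)
    (hspan : ¬ ∃ B : Matrix n n ℝ, B ∈ Submodule.span ℝ (Set.range A) ∧ B ≠ 0 ∧ B.PosSemidef ∧
      (B * X₀).trace = 0)
    (hP : P.PosSemidef) (hPX₀ : (P * X₀).trace = 0)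
    (h : ∀ X : Matrix n n ℝ, X.IsSymm → ((∑ i, c i • A i + P) * (X - X₀)).trace ≤ 0) :
    ∑ i, c i • A i = 0 ∧ P = 0 := by
  have hcA : (∑ i, c i • A i).IsSymm := by
    simp only [IsSymm, transpose_sum, transpose_smul, fun i => (hA i).eq]
  have hsum : ∑ i, c i • A i + P = 0 := (hcA.add hP.isSymm).eq_zero_of_trace_mul_nonpos
    fun S hS => by simpa using h (X₀ + S) (hX₀.add hS)
  have hP0 : P = 0 := by
    by_contra hP0
    refine hspan ⟨P, ?_, hP0, hP, hPX₀⟩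
    rw [eq_neg_of_add_eq_zero_right hsum, ← Finset.sum_neg_distrib]
    exact Submodule.sum_mem _ fun i _ =>
      neg_smul (c i) (A i) ▸ Submodule.smul_mem _ _ (Submodule.subset_span ⟨i, rfl⟩)
  exact ⟨by simpa [hP0] using hsum, hP0⟩

end

/-- **Theorem 3.** If `X₀ = x₀x₀ᵀ` minimizes the problem and no nonzero matrix in the
span of the measurement matrices is positive semidefinite and orthogonal to `X₀`,
then a dual certificate exists at `X₀`. -/
theorem dual_certificate_exists_of_no_orthogonal_psd {n m : ℕ}
    (f : Matrix (Fin n) (Fin n) ℝ → ℝ)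
    (A : Fin m → Matrix (Fin n) (Fin n) ℝ)
    (x₀ : Fin n → ℝ) (X₀ : Matrix (Fin n) (Fin n) ℝ) (b : Fin m → ℝ)
    (hX₀ : X₀ = vecMulVec x₀ x₀)
    (hb : ∀ i, b i = (X₀ * A i).trace)
    (hf : ConvexOn ℝ {X : Matrix (Fin n) (Fin n) ℝ | X.IsSymm} f)
    (hA : ∀ i, (A i).IsSymm)
    (hmin : ∀ X : Matrix (Fin n) (Fin n) ℝ, X.PosSemidef →
      (∀ i, (X * A i).trace = b i) → f X₀ ≤ f X)
    (hspan : ¬ ∃ B : Matrix (Fin n) (Fin n) ℝ,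
      B ∈ Submodule.span ℝ (Set.range A) ∧ B ≠ 0 ∧ B.PosSemidef ∧
        (B * X₀).trace = 0) :
    ∃ (lam : Fin m → ℝ) (Q : Matrix (Fin n) (Fin n) ℝ),
      (-Q).PosSemidef ∧ (Q * X₀).trace = 0 ∧
      ∀ X : Matrix (Fin n) (Fin n) ℝ, X.IsSymm →
        f X ≥ f X₀ - (((∑ i, lam i • A i) + Q) * (X - X₀)).trace := by
  have hX₀psd : X₀.PosSemidef := hX₀ ▸ posSemidef_vecMulVec_self_star x₀
  obtain ⟨μ, c, P, hμ, hP, hPX₀, hnd, hineq⟩ := exists_fritzJohn_multipliers hf hX₀psd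
    fun X hX hc => hmin X hX fun i => (hc i).trans (hb i).symm
  have hμ0 : μ ≠ 0 := by
    rintro rfl
    exact hnd ⟨rfl, sum_smul_eq_zero_and_eq_zero_of_no_orthogonal_psd hA hX₀psd.isSymm hspan hP
      hPX₀ fun X hX => by simpa only [zero_mul] using hineq X hX⟩
  have hμpos : 0 < μ := lt_of_le_of_ne hμ (Ne.symm hμ0)
  refine ⟨fun i => -(c i / μ), -μ⁻¹ • P, by simpa using hP.smul (inv_nonneg.2 hμ),
    by simp [hPX₀], fun X hX => ?_⟩
  have hcert : ∑ i, (-(c i / μ)) • A i + -μ⁻¹ • P = -μ⁻¹ • (∑ i, c i • A i + P) := by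
    simp only [smul_add, Finset.smul_sum, smul_smul, div_eq_inv_mul, neg_mul, neg_smul]
  have := (inv_mul_le_iff₀ hμpos).2 (hineq X hX)
  rw [hcert, smul_mul_assoc, trace_smul, smul_eq_mul]
  linarith
end

section
/- Let A₁,…,A_m be real symmetric n×n matrices, x₀ ∈ ℝⁿ, X₀ = x₀x₀ᵀ, bᵢ = ⟨X₀, Aᵢ⟩, and S = {Σᵢ λᵢAᵢ + Q : λ ∈ ℝ^m, Q ⪯ 0, ⟨Q, X₀⟩ = 0}. Suppose S fails the completeness condition at X₀, i.e. there exist λ ∈ ℝ^m with A = Σᵢ λᵢAᵢ ⪰ 0, ⟨A, X₀⟩ = 0, a vector y ∈ ℝⁿ, and q in the range of A such that yqᵀ + qyᵀ ∉ S. Then there exists a symmetric matrix C (one may take C = −(yqᵀ + qyᵀ)) such that: X₀ minimizes the linear objective X ↦ ⟨C, X⟩ over the feasible set {X ⪰ 0, ⟨X, Aᵢ⟩ = bᵢ ∀i}, yet no dual certificate exists at X₀, i.e. there are no λ ∈ ℝ^m and symmetric Q with Q ⪯ 0, ⟨Q, X₀⟩ = 0, and Σᵢ λᵢAᵢ + Q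 = −C. -/
/-!
Take `C = -(yqᵀ + qyᵀ)` with `q = Mv` and `M = Σ λᵢAᵢ ⪰ 0`, `⟨M, X₀⟩ = 0`. Every feasible `X`
has `⟨M, X⟩ = ⟨M, X₀⟩ = 0`; for positive semidefinite `M` and `X` this forces `XM = 0`, hence
`Xq = 0` and `⟨C, X⟩ = -2 yᵀXq = 0`. So the objective vanishes on the whole feasible set and
`X₀` is a minimizer, while a dual certificate `(λ, Q)` would exhibit `-C = yqᵀ + qyᵀ` as a
member of `S`.
-/

open Matrix
open scoped ComplexOrder

namespace Matrix

variable {n : Type*}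

theorem isSymm_vecMulVec_add_vecMulVec {R : Type*} [CommSemiring R] (y q : n → R) :
    (vecMulVec y q + vecMulVec q y).IsSymm := by
  simpa [transpose_vecMulVec] using isSymm_add_transpose_self (vecMulVec y q)

variable [Fintype n]

open scoped MatrixOrder in
theorem PosSemidef.mul_eq_zero_of_trace_mul_eq_zero {𝕜 : Type*} [RCLike 𝕜] {A B : Matrix n n 𝕜}
    (hA : A.PosSemidef) (hB : B.PosSemidef) (h : (A * B).trace = 0) : A * B = 0 := by
  classical
  obtain ⟨a, rfl⟩ := CStarAlgebra.nonneg_iff_eq_star_mul_self.mp hA.nonneg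
  obtain ⟨b, rfl⟩ := CStarAlgebra.nonneg_iff_eq_star_mul_self.mp hB.nonneg
  simp only [star_eq_conjTranspose] at h ⊢
  -- `tr(aᴴa bᴴb) = tr((abᴴ)ᴴ(abᴴ))`
  have hab : a * bᴴ = 0 := by
    rw [← trace_conjTranspose_mul_self_eq_zero_iff, ← h, conjTranspose_mul,
      conjTranspose_conjTranspose, mul_assoc, trace_mul_comm]
    simp only [mul_assoc]
  rw [mul_assoc, ← mul_assoc a, hab, zero_mul, mul_zero]

theorem PosSemidef.mulVec_eq_zero_of_mem_range {𝕜 : Type*} [RCLike 𝕜]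
    {M X : Matrix n n 𝕜} (hM : M.PosSemidef) (hX : X.PosSemidef) (h : (M * X).trace = 0)
    {q : n → 𝕜} (hq : q ∈ Set.range M.mulVec) : X *ᵥ q = 0 := by
  obtain ⟨v, rfl⟩ := hq
  rw [mulVec_mulVec, hX.mul_eq_zero_of_trace_mul_eq_zero hM (by rwa [trace_mul_comm]),
    zero_mulVec]

theorem trace_vecMulVec_add_vecMulVec_mul {R : Type*} [CommSemiring R] {X : Matrix n n R}
    (hX : X.IsSymm) (y q : n → R) :
    ((vecMulVec y q + vecMulVec q y) * X).trace = 2 * (y ⬝ᵥ X *ᵥ q) := by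
  rw [add_mul, trace_add, vecMulVec_mul, vecMulVec_mul, trace_vecMulVec, trace_vecMulVec,
    dotProduct_comm q, ← dotProduct_mulVec, ← mulVec_transpose, hX.eq, two_mul]

theorem trace_sum_smul_mul_congr {ι R : Type*} [Fintype ι] [CommSemiring R]
    {A : ι → Matrix n n R} {X Y : Matrix n n R} (h : ∀ i, (X * A i).trace = (Y * A i).trace)
    (c : ι → R) : ((∑ i, c i • A i) * X).trace = ((∑ i, c i • A i) * Y).trace := by
  simp only [Finset.sum_mul, trace_sum, smul_mul_assoc, trace_smul, trace_mul_comm (A _), h]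

theorem PosSemidef.trace_vecMulVec_add_vecMulVec_mul_eq_zero {M X : Matrix n n ℝ}
    (hM : M.PosSemidef) (hX : X.PosSemidef) (h : (M * X).trace = 0) (y : n → ℝ) {q : n → ℝ}
    (hq : q ∈ Set.range M.mulVec) : ((vecMulVec y q + vecMulVec q y) * X).trace = 0 := by
  rw [trace_vecMulVec_add_vecMulVec_mul (isHermitian_iff_isSymm.mp hX.isHermitian),
    hM.mulVec_eq_zero_of_mem_range hX h hq, dotProduct_zero, mul_zero]

end Matrix

theorem no_dual_certificate_of_not_complete_general {n m : ℕ}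
    (A : Fin m → Matrix (Fin n) (Fin n) ℝ)
    (x₀ : Fin n → ℝ) (X₀ : Matrix (Fin n) (Fin n) ℝ) (b : Fin m → ℝ)
    (S : Set (Matrix (Fin n) (Fin n) ℝ))
    (hX₀ : X₀ = vecMulVec x₀ x₀)
    (hb : ∀ i, b i = (X₀ * A i).trace)
    (hS : S = {Y : Matrix (Fin n) (Fin n) ℝ |
      ∃ (lam : Fin m → ℝ) (Q : Matrix (Fin n) (Fin n) ℝ),
        (-Q).PosSemidef ∧ (Q * X₀).trace = 0 ∧ Y = (∑ i, lam i • A i) + Q})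
    (hnotcomplete : ∃ (lam : Fin m → ℝ) (y q : Fin n → ℝ),
      (∑ i, lam i • A i).PosSemidef ∧ ((∑ i, lam i • A i) * X₀).trace = 0 ∧
      (∃ v, (∑ i, lam i • A i).mulVec v = q) ∧
      vecMulVec y q + vecMulVec q y ∉ S) :
    ∃ C : Matrix (Fin n) (Fin n) ℝ, C.IsSymm ∧
      (∀ X : Matrix (Fin n) (Fin n) ℝ, X.PosSemidef →
        (∀ i, (X * A i).trace = b i) → (C * X₀).trace ≤ (C * X).trace) ∧
      ¬ ∃ (lam : Fin m → ℝ) (Q : Matrix (Fin n) (Fin n) ℝ),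
        (-Q).PosSemidef ∧ (Q * X₀).trace = 0 ∧ (∑ i, lam i • A i) + Q = -C := by
  obtain ⟨lam, y, q, hM, hMX₀, hq, hnot⟩ := hnotcomplete
  refine ⟨-(vecMulVec y q + vecMulVec q y), (isSymm_vecMulVec_add_vecMulVec y q).neg, ?_, ?_⟩
  · intro X hX hfeas
    have hX₀ : X₀.PosSemidef := hX₀ ▸ by simpa using posSemidef_vecMulVec_self_star x₀
    have hMX : ((∑ i, lam i • A i) * X).trace = 0 := by
      rwa [trace_sum_smul_mul_congr (fun i => (hfeas i).trans (hb i)) lam]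
    rw [neg_mul, neg_mul, trace_neg, trace_neg,
      hM.trace_vecMulVec_add_vecMulVec_mul_eq_zero hX hMX y hq,
      hM.trace_vecMulVec_add_vecMulVec_mul_eq_zero hX₀ hMX₀ y hq]
  · rintro ⟨lam', Q, hQ, hQX₀, hcert⟩
    exact hnot (hS ▸ ⟨lam', Q, hQ, hQX₀, by rw [hcert, neg_neg]⟩)

/-- **Theorem 5 (weak necessity of completeness).** If `S` fails the completeness
condition at `X₀ = x₀x₀ᵀ`, then there is a (linear, hence convex) objective
`X ↦ ⟨C, X⟩` for which `X₀` is a minimizer over the feasible set but no dual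
certificate exists at `X₀`. -/
theorem no_dual_certificate_of_not_complete {n m : ℕ}
    (A : Fin m → Matrix (Fin n) (Fin n) ℝ)
    (x₀ : Fin n → ℝ) (X₀ : Matrix (Fin n) (Fin n) ℝ) (b : Fin m → ℝ)
    (S : Set (Matrix (Fin n) (Fin n) ℝ))
    (hX₀ : X₀ = vecMulVec x₀ x₀)
    (hb : ∀ i, b i = (X₀ * A i).trace)
    (hA : ∀ i, (A i).IsSymm)
    (hS : S = {Y : Matrix (Fin n) (Fin n) ℝ |
      ∃ (lam : Fin m → ℝ) (Q : Matrix (Fin n) (Fin n) ℝ),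
        (-Q).PosSemidef ∧ (Q * X₀).trace = 0 ∧ Y = (∑ i, lam i • A i) + Q})
    (hnotcomplete : ∃ (lam : Fin m → ℝ) (y q : Fin n → ℝ),
      (∑ i, lam i • A i).PosSemidef ∧ ((∑ i, lam i • A i) * X₀).trace = 0 ∧
      (∃ v, (∑ i, lam i • A i).mulVec v = q) ∧
      vecMulVec y q + vecMulVec q y ∉ S) :
    ∃ C : Matrix (Fin n) (Fin n) ℝ, C.IsSymm ∧
      (∀ X : Matrix (Fin n) (Fin n) ℝ, X.PosSemidef →
        (∀ i, (X * A i).trace = b i) → (C * X₀).trace ≤ (C * X).trace) ∧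
      ¬ ∃ (lam : Fin m → ℝ) (Q : Matrix (Fin n) (Fin n) ℝ),
        (-Q).PosSemidef ∧ (Q * X₀).trace = 0 ∧ (∑ i, lam i • A i) + Q = -C :=
  no_dual_certificate_of_not_complete_general A x₀ X₀ b S hX₀ hb hS hnotcomplete
end

section
/- Let A₁,…,A_m be real symmetric n×n matrices, x₀ ∈ ℝⁿ, X₀ = x₀x₀ᵀ, bᵢ = ⟨X₀, Aᵢ⟩, and S = {Σᵢ λᵢAᵢ + Q : λ ∈ ℝ^m, Q ⪯ 0, ⟨Q, X₀⟩ = 0}. If S fails the completeness condition at X₀ — i.e. there exist λ with A = Σᵢ λᵢAᵢ ⪰ 0, ⟨A, X₀⟩ = 0, y ∈ ℝⁿ, and q in the range of A such that yqᵀ + qyᵀ ∉ S — then the normal cone of the feasible set at X₀ strictly contains S: the matrix Y = yqᵀ + qyᵀ satisfies ⟨Y, X − X₀⟩ ≤ 0 for every symmetric X with X ⪰ 0 and ⟨X, Aᵢ⟩ = bᵢ for all i, yet Y ∉ S. -/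
open Matrix

/-!
Put `N = ∑ λᵢ Aᵢ ⪰ 0`. Every feasible `X` has `⟨N, X⟩ = ∑ λᵢ bᵢ = ⟨N, X₀⟩ = 0`, and for positive
semidefinite matrices a vanishing trace pairing forces `N X = X N = 0`. As `q = N v` lies in the
range of `N`, `Y = yqᵀ + qyᵀ = y vᵀ N + N v yᵀ`, so `⟨Y, X⟩ = 0` for every feasible `X`, and in
particular `⟨Y, X - X₀⟩ = 0`.
-/

open scoped ComplexOrder MatrixOrder in
theorem Matrix.PosSemidef.mul_eq_zero_of_trace_mul_eq_zero_s9 {𝕜 n : Type*} [RCLike 𝕜] [Fintype n]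
    {A B : Matrix n n 𝕜} (hA : A.PosSemidef) (hB : B.PosSemidef) (h : (A * B).trace = 0) :
    A * B = 0 := by
  classical
  -- with `A = CᴴC` and `B = DᴴD`, `tr (A * B)` is the squared Frobenius norm of `C * Dᴴ`
  obtain ⟨C, rfl⟩ := CStarAlgebra.nonneg_iff_eq_star_mul_self.mp hA.nonneg
  obtain ⟨D, rfl⟩ := CStarAlgebra.nonneg_iff_eq_star_mul_self.mp hB.nonneg
  rw [star_eq_conjTranspose, star_eq_conjTranspose] at h ⊢
  have hCD : C * Dᴴ = 0 := by
    rw [← trace_mul_conjTranspose_self_eq_zero_iff, conjTranspose_mul, conjTranspose_conjTranspose,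
      ← h, Matrix.mul_assoc Cᴴ, trace_mul_comm Cᴴ]
    simp only [Matrix.mul_assoc]
  rw [Matrix.mul_assoc, ← Matrix.mul_assoc C, hCD, Matrix.zero_mul, Matrix.mul_zero]

theorem Matrix.trace_sum_smul_mul_congr_s9 {ι n R : Type*} [Fintype ι] [Fintype n] [CommSemiring R]
    (A : ι → Matrix n n R) (c : ι → R) {X X' : Matrix n n R}
    (h : ∀ i, (X * A i).trace = (X' * A i).trace) :
    ((∑ i, c i • A i) * X).trace = ((∑ i, c i • A i) * X').trace := by
  simp only [Finset.sum_mul, trace_sum, smul_mul, trace_smul, trace_mul_comm (A _), h]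

theorem Matrix.trace_vecMulVec_mulVec_add_mul_eq_zero {n R : Type*} [Fintype n] [CommSemiring R]
    {N M : Matrix n n R} (hN : N.IsSymm) (hNM : N * M = 0) (hMN : M * N = 0) (y v : n → R) :
    ((vecMulVec y (N *ᵥ v) + vecMulVec (N *ᵥ v) y) * M).trace = 0 := by
  have hright : vecMulVec y (N *ᵥ v) = vecMulVec y v * N := by
    rw [vecMulVec_mul, ← mulVec_transpose, hN.eq]
  rw [hright, ← mul_vecMulVec, Matrix.add_mul, trace_add, Matrix.mul_assoc, hNM, Matrix.mul_zero,
    trace_mul_cycle, hMN, Matrix.zero_mul, trace_zero, add_zero]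

theorem normal_cone_strictly_contains_of_not_complete_general {n m : ℕ}
    (A : Fin m → Matrix (Fin n) (Fin n) ℝ)
    (x₀ : Fin n → ℝ) (X₀ : Matrix (Fin n) (Fin n) ℝ) (b : Fin m → ℝ)
    (hX₀ : X₀ = vecMulVec x₀ x₀)
    (hb : ∀ i, b i = (X₀ * A i).trace)
    (lam : Fin m → ℝ) (y q : Fin n → ℝ)
    (hpsd : (∑ i, lam i • A i).PosSemidef)
    (horth : ((∑ i, lam i • A i) * X₀).trace = 0)
    (hq : ∃ v, (∑ i, lam i • A i).mulVec v = q) :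
    ∀ X : Matrix (Fin n) (Fin n) ℝ, X.PosSemidef → (∀ i, (X * A i).trace = b i) →
      ((vecMulVec y q + vecMulVec q y) * (X - X₀)).trace ≤ 0 := by
  intro X hX hfeas
  set N := ∑ i, lam i • A i
  obtain ⟨v, rfl⟩ := hq
  have hNsymm : N.IsSymm := (conjTranspose_eq_transpose_of_trivial N).symm.trans hpsd.isHermitian
  have hX₀psd : X₀.PosSemidef := by simpa [hX₀] using posSemidef_vecMulVec_self_star x₀
  have hNX : (N * X).trace = 0 :=
    (trace_sum_smul_mul_congr_s9 A lam fun i => (hfeas i).trans (hb i)).trans horth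
  have vanishes_on {M : Matrix (Fin n) (Fin n) ℝ} (hM : M.PosSemidef) (h : (N * M).trace = 0) :
      ((vecMulVec y (N *ᵥ v) + vecMulVec (N *ᵥ v) y) * M).trace = 0 :=
    trace_vecMulVec_mulVec_add_mul_eq_zero hNsymm (hpsd.mul_eq_zero_of_trace_mul_eq_zero_s9 hM h)
      (hM.mul_eq_zero_of_trace_mul_eq_zero_s9 hpsd (trace_mul_comm M N ▸ h)) y v
  rw [Matrix.mul_sub, trace_sub, vanishes_on hX hNX, vanishes_on hX₀psd horth, sub_zero]

/-- **Lemma (subgradient additivity, failure direction).** If `S` fails the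
completeness condition at `X₀ = x₀x₀ᵀ` via witnesses `λ, y, q`, then the matrix
`Y = yqᵀ + qyᵀ` lies in the normal cone of the feasible set at `X₀` even though
`Y ∉ S`: the normal cone strictly contains `S`. -/
theorem normal_cone_strictly_contains_of_not_complete {n m : ℕ}
    (A : Fin m → Matrix (Fin n) (Fin n) ℝ)
    (x₀ : Fin n → ℝ) (X₀ : Matrix (Fin n) (Fin n) ℝ) (b : Fin m → ℝ)
    (S : Set (Matrix (Fin n) (Fin n) ℝ))
    (hX₀ : X₀ = vecMulVec x₀ x₀)
    (hb : ∀ i, b i = (X₀ * A i).trace)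
    (hA : ∀ i, (A i).IsSymm)
    (hS : S = {Y : Matrix (Fin n) (Fin n) ℝ |
      ∃ (lam : Fin m → ℝ) (Q : Matrix (Fin n) (Fin n) ℝ),
        (-Q).PosSemidef ∧ (Q * X₀).trace = 0 ∧ Y = (∑ i, lam i • A i) + Q})
    (lam : Fin m → ℝ) (y q : Fin n → ℝ)
    (hpsd : (∑ i, lam i • A i).PosSemidef)
    (horth : ((∑ i, lam i • A i) * X₀).trace = 0)
    (hq : ∃ v, (∑ i, lam i • A i).mulVec v = q)
    (hnotS : vecMulVec y q + vecMulVec q y ∉ S) :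
    ∀ X : Matrix (Fin n) (Fin n) ℝ, X.PosSemidef → (∀ i, (X * A i).trace = b i) →
      ((vecMulVec y q + vecMulVec q y) * (X - X₀)).trace ≤ 0 :=
  normal_cone_strictly_contains_of_not_complete_general A x₀ X₀ b hX₀ hb lam y q hpsd horth hq
end

section
/- Let A₁,…,A_m be real symmetric n×n matrices, x₀ ∈ ℝⁿ, X₀ = x₀x₀ᵀ, and S = {Σᵢ λᵢAᵢ + Q : λ ∈ ℝ^m, Q ⪯ 0, ⟨Q, X₀⟩ = 0}. If S satisfies the completeness condition at X₀ — whenever A = Σᵢ λᵢAᵢ ⪰ 0 and ⟨A, X₀⟩ = 0, then yqᵀ + qyᵀ ∈ S for all y ∈ ℝⁿ and all q in the range of A — then S is a closed subset of the space of real symmetric n×n matrices. -/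
/-!
Write `S = L + (-F)` with `L = span {Aᵢ}` and `F = {B ⪰ 0 | x₀ᵀ B x₀ = 0}`. In finite dimension,
the sum of a subspace and a closed cone is closed as soon as they meet only in `0`, but `L` may
well contain nonzero elements of `F`. Among those, pick `A*` with the smallest kernel, so that
every element of `L ∩ F` vanishes on `ker A*`, and let `N` be the orthogonal projection onto
`ker A*`. Completeness puts every `A* B + (A* B)ᵀ` into `S`, hence `M - N M N ∈ S` for every
symmetric `M`. So `S` consists of the symmetric matrices whose compression `N M N` lies in
`N L N + (-F)`, and `N L N` meets `F` only in `0`: by the choice of `A*`, a positive element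
`N l N` of `N L N` is the compression of an element of `-F`.
-/

open Filter Topology Matrix
open scoped Pointwise

section ClosedSum

variable {E : Type*} [NormedAddCommGroup E] [NormedSpace ℝ E] [FiniteDimensional ℝ E]

theorem PointedCone.exists_mul_norm_le_norm_add {L : Submodule ℝ E} {C : PointedCone ℝ E}
    (hC : IsClosed (C : Set E)) (hLC : Disjoint (L : PointedCone ℝ E) C) :
    ∃ r > 0, ∀ l ∈ L, ∀ c ∈ C, r * ‖l‖ ≤ ‖l + c‖ := by
  have hsep : Disjoint (Metric.sphere 0 1 ∩ L : Set E) C := by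
    refine Set.disjoint_left.2 fun u ⟨hu, huL⟩ huC => ?_
    have : u = 0 := Submodule.disjoint_def.1 hLC u huL huC
    simp [this] at hu
  -- the unit sphere of `L` is compact and misses `C`, so it stays at a positive distance from `C`
  obtain ⟨r, hr, hsep⟩ := Metric.exists_pos_forall_lt_edist
    ((isCompact_sphere 0 1).inter_right (Submodule.closed_of_finiteDimensional L)) hC hsep
  refine ⟨r, hr, fun l hl c hc => ?_⟩
  rcases eq_or_ne l 0 with rfl | hl0
  · simp
  have hl' : 0 < ‖l‖ := norm_pos_iff.2 hl0
  have key := hsep (-‖l‖⁻¹ • l) (Set.mem_inter (by simp [norm_smul, hl'.ne']) (L.smul_mem _ hl))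
    (‖l‖⁻¹ • c) (C.smul_mem (by positivity) hc)
  rw [edist_nndist, ENNReal.coe_lt_coe, ← NNReal.coe_lt_coe, coe_nndist, dist_eq_norm,
    neg_smul, ← neg_add', ← smul_add, norm_neg, norm_smul, norm_inv, norm_norm,
    lt_inv_mul_iff₀ hl'] at key
  linarith [mul_comm ‖l‖ (r : ℝ)]

theorem PointedCone.isClosed_ofSubmodule_sup {L : Submodule ℝ E} {C : PointedCone ℝ E}
    (hC : IsClosed (C : Set E)) (hLC : Disjoint (L : PointedCone ℝ E) C) :
    IsClosed ((L ⊔ C : PointedCone ℝ E) : Set E) := by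
  obtain ⟨r, hr, hLC⟩ := exists_mul_norm_le_norm_add hC hLC
  refine isClosed_of_closure_subset fun z hz => ?_
  obtain ⟨w, hw, hwz⟩ := mem_closure_iff_seq_limit.1 hz
  choose l hl c hc hlc using fun k => Submodule.mem_sup.1 (hw k)
  obtain ⟨R, hR⟩ := isBounded_iff_forall_norm_le.1 (Metric.isBounded_range_of_tendsto w hwz)
  have hl_bdd : ∀ k, l k ∈ Metric.closedBall 0 (R / r) := fun k => by
    rw [mem_closedBall_zero_iff, le_div_iff₀' hr]
    exact (hLC _ (hl k) _ (hc k)).trans (hlc k ▸ hR _ ⟨k, rfl⟩)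
  obtain ⟨a, -, φ, hφ, hla⟩ := tendsto_subseq_of_bounded Metric.isBounded_closedBall hl_bdd
  have haL : a ∈ L := (Submodule.closed_of_finiteDimensional L).mem_of_tendsto hla
    (Eventually.of_forall fun k => hl (φ k))
  have hca : Tendsto (c ∘ φ) atTop (𝓝 (z - a)) := by
    convert (hwz.comp hφ.tendsto_atTop).sub hla using 1
    ext k; simp [← hlc]
  have hzaC : z - a ∈ C := hC.mem_of_tendsto hca (Eventually.of_forall fun k => hc (φ k))
  exact Submodule.mem_sup.2 ⟨a, haL, z - a, hzaC, add_sub_cancel a z⟩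

end ClosedSum

namespace Matrix

section RCLike

open scoped ComplexOrder

variable {n 𝕜 : Type*} [RCLike 𝕜]

theorem PosSemidef.eq_zero_of_neg {A : Matrix n n 𝕜} (hA : A.PosSemidef) (hA' : (-A).PosSemidef) :
    A = 0 := by
  open scoped MatrixOrder in
  exact le_antisymm (by simpa [le_iff] using hA') hA.nonneg

variable [Fintype n]

theorem isClosed_setOf_posSemidef : IsClosed {M : Matrix n n 𝕜 | M.PosSemidef} := by
  simp only [posSemidef_iff_dotProduct_mulVec, Set.ofPred_and, Set.ofPred_forall]
  refine (isClosed_eq continuous_id.matrix_conjTranspose continuous_id).inter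
    (isClosed_iInter fun x => isClosed_le continuous_const ?_)
  fun_prop

theorem PosSemidef.mulVec_eq_zero_of_add_mulVec_eq_zero {A B : Matrix n n 𝕜} (hA : A.PosSemidef)
    (hB : B.PosSemidef) {v : n → 𝕜} (h : (A + B) *ᵥ v = 0) : A *ᵥ v = 0 := by
  rw [← hA.dotProduct_mulVec_zero_iff]
  have hsum : star v ⬝ᵥ A *ᵥ v + star v ⬝ᵥ B *ᵥ v = 0 := by
    rw [← dotProduct_add, ← add_mulVec, h, dotProduct_zero]
  exact ((add_eq_zero_iff_of_nonneg (hA.dotProduct_mulVec_nonneg v)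
    (hB.dotProduct_mulVec_nonneg v)).1 hsum).1

theorem exists_ker_mulVecLin_le_of_posSemidef (K : AddSubmonoid (Matrix n n 𝕜))
    (hK : ∀ B ∈ K, B.PosSemidef) :
    ∃ A ∈ K, ∀ B ∈ K, LinearMap.ker A.mulVecLin ≤ LinearMap.ker B.mulVecLin := by
  let ker : Matrix n n 𝕜 → Submodule 𝕜 (n → 𝕜) := fun M => LinearMap.ker M.mulVecLin
  have hker_add : ∀ A ∈ K, ∀ B ∈ K, ker (A + B) ≤ ker A := fun A hA B hB _ hv =>
    (hK A hA).mulVec_eq_zero_of_add_mulVec_eq_zero (hK B hB) hv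
  -- a kernel of minimal dimension cannot shrink on adding `B`, so it lies in `ker B`
  let dim : Matrix n n 𝕜 → ℕ := fun M => Module.finrank 𝕜 (ker M)
  let A := Function.argminOn dim (K : Set _) ⟨0, K.zero_mem⟩
  have hA : A ∈ K := Function.argminOn_mem _ _ _
  refine ⟨A, hA, fun B hB v hv => ?_⟩
  have hAB : ker (A + B) = ker A := Submodule.eq_of_le_of_finrank_le (hker_add A hA B hB)
    (Function.argminOn_le dim _ (K.add_mem hA hB))
  have hv' : v ∈ ker (B + A) := by rw [add_comm, hAB]; exact hv
  exact hker_add B hB A hA hv'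

theorem IsHermitian.exists_ker_projection [DecidableEq n] {A : Matrix n n 𝕜}
    (hA : A.IsHermitian) :
    ∃ N G : Matrix n n 𝕜, N.IsHermitian ∧ N * N = N ∧ A * N = 0 ∧ A * G = 1 - N ∧
      G * A = 1 - N := by
  have hsa : IsSelfAdjoint A := hA
  have hmul (f g : ℝ → ℝ) : cfc f A * cfc g A = cfc (fun t => f t * g t) A :=
    (cfc_mul f g A (finite_real_spectrum.continuousOn _) (finite_real_spectrum.continuousOn _)).symm
  have hone_sub (f : ℝ → ℝ) : 1 - cfc f A = cfc (fun t => 1 - f t) A := by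
    rw [cfc_sub (fun _ => 1) f A continuousOn_const (finite_real_spectrum.continuousOn _),
      cfc_const_one ℝ A]
  -- `N = 1_{0}(A)` and `G = A⁺`, the latter because `0⁻¹ = 0`
  let ind : ℝ → ℝ := fun t => if t = 0 then 1 else 0
  refine ⟨cfc ind A, cfc (fun t : ℝ => t⁻¹) A, cfc_predicate _ A, ?_, ?_, ?_, ?_⟩
  · rw [hmul]; congr 1; ext t; by_cases ht : t = 0 <;> simp [ind, ht]
  · nth_rw 1 [← cfc_id' ℝ A]
    rw [hmul, ← cfc_const_zero ℝ A]; congr 1; ext t; simp [ind]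
  · nth_rw 1 [← cfc_id' ℝ A]
    rw [hmul, hone_sub]; congr 1; ext t; by_cases ht : t = 0 <;> simp [ind, ht]
  · nth_rw 2 [← cfc_id' ℝ A]
    rw [hmul, hone_sub]; congr 1; ext t; by_cases ht : t = 0 <;> simp [ind, ht]

end RCLike

section VecMulVec

variable {n R : Type*} [Fintype n] [CommSemiring R]

theorem trace_mul_vecMulVec_self (Q : Matrix n n R) (x : n → R) :
    (Q * vecMulVec x x).trace = x ⬝ᵥ Q *ᵥ x := by
  rw [mul_vecMulVec, trace_vecMulVec, dotProduct_comm]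

variable [DecidableEq n]

theorem sum_vecMulVec_mulVec_single (X : Matrix n n R) :
    ∑ j, vecMulVec (X *ᵥ Pi.single j 1) (Pi.single j 1) = X := by
  ext i k
  simp [sum_apply, vecMulVec_apply, mulVec_single, Pi.single_apply]

theorem sum_vecMulVec_single_mulVec (X : Matrix n n R) :
    ∑ j, vecMulVec (Pi.single j 1) (X *ᵥ Pi.single j 1) = Xᵀ := by
  ext i k
  simp [sum_apply, vecMulVec_apply, mulVec_single, Pi.single_apply]

theorem mul_add_transpose_mem_of_vecMulVec_mem {S : AddSubmonoid (Matrix n n R)}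
    {A : Matrix n n R} (hS : ∀ y v, vecMulVec y (A *ᵥ v) + vecMulVec (A *ᵥ v) y ∈ S)
    (B : Matrix n n R) : A * B + (A * B)ᵀ ∈ S := by
  have hsum : ∑ j, (vecMulVec (Pi.single j 1) ((A * B) *ᵥ Pi.single j 1) +
      vecMulVec ((A * B) *ᵥ Pi.single j 1) (Pi.single j 1)) = (A * B)ᵀ + A * B := by
    rw [Finset.sum_add_distrib, sum_vecMulVec_single_mulVec, sum_vecMulVec_mulVec_single]
  rw [add_comm, ← hsum]
  exact sum_mem fun j _ => by rw [← mulVec_mulVec]; exact hS _ _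

end VecMulVec

section Face

variable {n : Type*} [Fintype n]

def posSemidefFace (x : n → ℝ) : PointedCone ℝ (Matrix n n ℝ) where
  carrier := {B | B.PosSemidef ∧ x ⬝ᵥ B *ᵥ x = 0}
  add_mem' := fun ⟨hA, hAx⟩ ⟨hB, hBx⟩ =>
    ⟨hA.add hB, by rw [add_mulVec, dotProduct_add, hAx, hBx, add_zero]⟩
  zero_mem' := ⟨PosSemidef.zero, by simp⟩
  smul_mem' := fun c _ ⟨hB, hBx⟩ => ⟨hB.smul c.2, by simp [smul_mulVec, hBx]⟩

def dualCertificateCone (L : Submodule ℝ (Matrix n n ℝ)) (x : n → ℝ) :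
    PointedCone ℝ (Matrix n n ℝ) :=
  L ⊔ -posSemidefFace x

variable {x : n → ℝ}

theorem isClosed_posSemidefFace : IsClosed (posSemidefFace x : Set (Matrix n n ℝ)) :=
  isClosed_setOf_posSemidef.inter (isClosed_eq (by fun_prop) continuous_const)

theorem mem_dualCertificateCone_span_range_iff {ι : Type*} [Fintype ι] {A : ι → Matrix n n ℝ}
    {Y : Matrix n n ℝ} :
    Y ∈ dualCertificateCone (Submodule.span ℝ (Set.range A)) x ↔
      ∃ (lam : ι → ℝ) (Q : Matrix n n ℝ),
        (-Q).PosSemidef ∧ x ⬝ᵥ Q *ᵥ x = 0 ∧ Y = (∑ i, lam i • A i) + Q := by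
  constructor
  · intro hY
    obtain ⟨l, hl, Q, ⟨hQ, hQx⟩, rfl⟩ := Submodule.mem_sup.1 hY
    obtain ⟨lam, rfl⟩ := (Submodule.mem_span_range_iff_exists_fun ℝ).1 hl
    exact ⟨lam, Q, hQ, by simpa [neg_mulVec] using hQx, rfl⟩
  · rintro ⟨lam, Q, hQ, hQx, rfl⟩
    refine Submodule.add_mem_sup ((Submodule.mem_span_range_iff_exists_fun ℝ).2 ⟨lam, rfl⟩) ?_
    exact ⟨hQ, by simp [neg_mulVec, hQx]⟩

theorem transpose_eq_of_mem_posSemidefFace {B : Matrix n n ℝ} (hB : B ∈ posSemidefFace x) :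
    Bᵀ = B := by
  rw [← conjTranspose_eq_transpose_of_trivial]; exact hB.1.1

theorem mul_mul_mem_posSemidefFace {N B : Matrix n n ℝ} (hN : Nᵀ = N) (hNx : N *ᵥ x = x)
    (hB : B ∈ posSemidefFace x) : N * B * N ∈ posSemidefFace x := by
  refine ⟨by simpa [conjTranspose_eq_transpose_of_trivial, hN] using
    hB.1.mul_mul_conjTranspose_same N, ?_⟩
  rw [← mulVec_mulVec, ← mulVec_mulVec, hNx, dotProduct_mulVec x N, ← mulVec_transpose, hN, hNx,
    hB.2]

end Face

section Compression

variable {n : Type*} [Fintype n] [DecidableEq n] {x : n → ℝ} {L : Submodule ℝ (Matrix n n ℝ)}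
  {N : Matrix n n ℝ}

theorem sub_mul_mul_mem_of_forall_add_transpose_mem {S : Set (Matrix n n ℝ)} (hN : Nᵀ = N)
    (hS : ∀ B, (1 - N) * B + ((1 - N) * B)ᵀ ∈ S) {M : Matrix n n ℝ} (hM : Mᵀ = M) :
    M - N * M * N ∈ S := by
  convert hS (M - (2⁻¹ : ℝ) • (M * (1 - N))) using 1
  simp only [transpose_mul, transpose_sub, transpose_smul, transpose_one, hN, hM]
  simp only [mul_sub, sub_mul, mul_one, one_mul, mul_smul_comm, smul_mul_assoc, smul_sub,
    mul_assoc]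
  module

theorem disjoint_map_mulLeftRight_neg_posSemidefFace (hN : Nᵀ = N) (hNN : N * N = N)
    (hNx : N *ᵥ x = x)
    (hlin : ∀ M, Mᵀ = M → M - N * M * N ∈ dualCertificateCone L x)
    (hL : ∀ B ∈ L, Bᵀ = B)
    (hker : ∀ B ∈ (L ⊓ posSemidefFace x : PointedCone ℝ (Matrix n n ℝ)), B * N = 0) :
    Disjoint ((L.map (LinearMap.mulLeftRight ℝ (N, N)) : Submodule ℝ (Matrix n n ℝ)) :
      PointedCone ℝ (Matrix n n ℝ)) (-posSemidefFace x) := by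
  refine Submodule.disjoint_def.2 fun y hy hyF => neg_eq_zero.1 ?_
  obtain ⟨l, hl, hly⟩ := Submodule.mem_map.1 (Submodule.neg_mem _ hy)
  rw [LinearMap.mulLeftRight_apply] at hly
  obtain ⟨l₁, hl₁, q, hq, hsum⟩ := Submodule.mem_sup.1 (hlin (-l) (by rw [transpose_neg, hL l hl]))
  have hl_add : l + l₁ = -y - q := by
    rw [← hly, eq_sub_iff_add_eq, add_assoc, hsum]; noncomm_ring
  have hF : l + l₁ ∈ (L ⊓ posSemidefFace x : PointedCone ℝ (Matrix n n ℝ)) := by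
    refine ⟨L.add_mem hl hl₁, ?_⟩
    rw [hl_add, sub_eq_add_neg]
    exact add_mem (Submodule.mem_neg.1 hyF) hq
  -- `N` annihilates `l + l₁` and fixes `-y`, so compressing `l + l₁ = -y - q` leaves `-y = N q N`
  have hy : -y = N * q * N := by
    have h0 : N * (-y - q) * N = 0 := by rw [← hl_add, mul_assoc, hker _ hF, mul_zero]
    have hfix : N * -y * N = -y := by rw [← hly, ← mul_assoc, ← mul_assoc, hNN, mul_assoc, hNN]
    rwa [mul_sub, sub_mul, hfix, sub_eq_zero] at h0
  refine (Submodule.mem_neg.1 hyF).1.eq_zero_of_neg ?_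
  rw [hy, ← neg_mul, ← mul_neg]
  exact (mul_mul_mem_posSemidefFace hN hNx hq).1

theorem coe_dualCertificateCone_eq (hN : Nᵀ = N) (hNx : N *ᵥ x = x)
    (hlin : ∀ M, Mᵀ = M → M - N * M * N ∈ dualCertificateCone L x)
    (hL : ∀ B ∈ L, Bᵀ = B) :
    (dualCertificateCone L x : Set (Matrix n n ℝ)) =
      {M | Mᵀ = M} ∩ LinearMap.mulLeftRight ℝ (N, N) ⁻¹'
        (((L.map (LinearMap.mulLeftRight ℝ (N, N)) : Submodule ℝ (Matrix n n ℝ)) :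
          PointedCone ℝ (Matrix n n ℝ)) ⊔ -posSemidefFace x : PointedCone ℝ (Matrix n n ℝ)) := by
  ext M
  simp only [Set.mem_inter_iff, Set.mem_ofPred_eq, Set.mem_preimage, SetLike.mem_coe,
    LinearMap.mulLeftRight_apply]
  constructor
  · rintro hM
    obtain ⟨l, hl, q, hq, rfl⟩ := Submodule.mem_sup.1 hM
    have hqt : qᵀ = q := by
      simpa using transpose_eq_of_mem_posSemidefFace (Submodule.mem_neg.1 hq)
    refine ⟨by rw [transpose_add, hL l hl, hqt], Submodule.mem_sup.2
      ⟨N * l * N, Submodule.mem_map_of_mem hl, N * q * N, ?_, by rw [mul_add, add_mul]⟩⟩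
    rw [Submodule.mem_neg, ← neg_mul, ← mul_neg]
    exact mul_mul_mem_posSemidefFace hN hNx hq
  · rintro ⟨hM, hΦM⟩
    obtain ⟨l', hl', q, hq, hsum⟩ := Submodule.mem_sup.1 hΦM
    obtain ⟨l, hl, rfl⟩ := Submodule.mem_map.1 hl'
    rw [LinearMap.mulLeftRight_apply] at hsum
    have hl_lin := hlin (-l) (by rw [transpose_neg, hL l hl])
    have hlq : l + q ∈ dualCertificateCone L x := Submodule.add_mem_sup hl hq
    convert add_mem (hlin M hM) (add_mem hl_lin hlq) using 1
    rw [← hsum]; noncomm_ring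

theorem isClosed_dualCertificateCone (hL : ∀ B ∈ L, Bᵀ = B)
    (hcomplete : ∀ A ∈ (L ⊓ posSemidefFace x : PointedCone ℝ (Matrix n n ℝ)), ∀ B,
      A * B + (A * B)ᵀ ∈ dualCertificateCone L x) :
    IsClosed (dualCertificateCone L x : Set (Matrix n n ℝ)) := by
  obtain ⟨A, hA, hmax⟩ := exists_ker_mulVecLin_le_of_posSemidef
    (L ⊓ posSemidefFace x : PointedCone ℝ (Matrix n n ℝ)).toAddSubmonoid fun B hB => hB.2.1
  obtain ⟨N, G, hNh, hNN, hAN, hAG, hGA⟩ := hA.2.1.1.exists_ker_projection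
  have hN : Nᵀ = N := by rw [← conjTranspose_eq_transpose_of_trivial]; exact hNh
  have hNx : N *ᵥ x = x := by
    have hAx : A *ᵥ x = 0 := (hA.2.1.dotProduct_mulVec_zero_iff x).1 (by simpa using hA.2.2)
    have h : (1 - N) *ᵥ x = 0 := by rw [← hGA, ← mulVec_mulVec, hAx, mulVec_zero]
    rwa [sub_mulVec, one_mulVec, sub_eq_zero, eq_comm] at h
  have hlin : ∀ M, Mᵀ = M → M - N * M * N ∈ dualCertificateCone L x := fun M hM =>
    sub_mul_mul_mem_of_forall_add_transpose_mem hN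
      (fun B => by rw [← hAG, mul_assoc]; exact hcomplete A hA (G * B)) hM
  have hker : ∀ B ∈ (L ⊓ posSemidefFace x : PointedCone ℝ (Matrix n n ℝ)), B * N = 0 :=
    fun B hB => ext_of_mulVec_single fun i => by
      rw [← mulVec_mulVec, zero_mulVec]
      exact hmax B hB (by rw [LinearMap.mem_ker, mulVecLin_apply, mulVec_mulVec, hAN, zero_mulVec])
  rw [coe_dualCertificateCone_eq hN hNx hlin hL]
  refine (isClosed_eq continuous_id.matrix_transpose continuous_id).inter
    (IsClosed.preimage (LinearMap.continuous_of_finiteDimensional _) ?_)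
  -- any norm on matrices induces their product topology
  let := Matrix.normedAddCommGroup (n := n) (m := n) (α := ℝ)
  let := Matrix.normedSpace (n := n) (m := n) (α := ℝ) (R := ℝ)
  exact PointedCone.isClosed_ofSubmodule_sup isClosed_posSemidefFace.neg
    (disjoint_map_mulLeftRight_neg_posSemidefFace hN hNN hNx hlin hL hker)

end Compression

end Matrix

/-- **Lemma 2 (closedness of `S`).** If `S` satisfies the completeness condition at
`X₀ = x₀x₀ᵀ`, then `S` is closed (in the Frobenius norm topology). -/
theorem S_isClosed_of_complete {n m : ℕ}
    (A : Fin m → Matrix (Fin n) (Fin n) ℝ)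
    (x₀ : Fin n → ℝ) (X₀ : Matrix (Fin n) (Fin n) ℝ)
    (S : Set (Matrix (Fin n) (Fin n) ℝ))
    (hX₀ : X₀ = vecMulVec x₀ x₀)
    (hA : ∀ i, (A i).IsSymm)
    (hS : S = {Y : Matrix (Fin n) (Fin n) ℝ |
      ∃ (lam : Fin m → ℝ) (Q : Matrix (Fin n) (Fin n) ℝ),
        (-Q).PosSemidef ∧ (Q * X₀).trace = 0 ∧ Y = (∑ i, lam i • A i) + Q})
    (hcomplete : ∀ lam : Fin m → ℝ,
      (∑ i, lam i • A i).PosSemidef → ((∑ i, lam i • A i) * X₀).trace = 0 →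
      ∀ (y q : Fin n → ℝ), (∃ v, (∑ i, lam i • A i).mulVec v = q) →
        vecMulVec y q + vecMulVec q y ∈ S) :
    IsClosed S := by
  let L := Submodule.span ℝ (Set.range A)
  let C := dualCertificateCone L x₀
  have hquad (Q : Matrix (Fin n) (Fin n) ℝ) : (Q * X₀).trace = x₀ ⬝ᵥ Q *ᵥ x₀ := by
    rw [hX₀, trace_mul_vecMulVec_self]
  have hSC : S = C := by
    ext Y
    simp only [hS, C, L, Set.mem_ofPred_eq, SetLike.mem_coe, mem_dualCertificateCone_span_range_iff,
      hquad]
  have hL : ∀ B ∈ L, Bᵀ = B := fun B hB => by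
    obtain ⟨c, rfl⟩ := (Submodule.mem_span_range_iff_exists_fun ℝ).1 hB
    simp only [transpose_sum, transpose_smul, fun i => (hA i).eq]
  refine hSC ▸ isClosed_dualCertificateCone hL fun A' hA' B => ?_
  obtain ⟨lam, rfl⟩ := (Submodule.mem_span_range_iff_exists_fun ℝ).1 hA'.1
  refine mul_add_transpose_mem_of_vecMulVec_mem (S := C.toAddSubmonoid) (fun y v => ?_) B
  have h := hcomplete lam hA'.2.1 (by rw [hquad]; exact hA'.2.2) y _ ⟨v, rfl⟩
  rwa [hSC] at h
end

section
/- Let x₀ ∈ ℝⁿ, X₀ = x₀x₀ᵀ, and let Λ be a real symmetric n×n matrix. If X₀ + δΛ ⪰ 0 for some δ > 0, then: (a) the compression of Λ to the orthogonal complement of x₀ is positive semidefinite, i.e. vᵀΛv ≥ 0 for every v ∈ ℝⁿ with vᵀx₀ = 0; and (b) for every q ∈ ℝⁿ with qᵀx₀ = 0 and ⟨Λ, qqᵀ⟩ = 0, one has ⟨Λ, x₀qᵀ + qx₀ᵀ⟩ = 0. -/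
/-!
Testing `x₀x₀ᵀ + δΛ ⪰ 0` against `v` gives `(v ⬝ x₀)² + δ vᵀΛv ≥ 0`. For `v ⊥ x₀` the first
term vanishes, which is (a). For `v = x₀ + t q` with `q ⊥ x₀` and `qᵀΛq = 0` the form is affine
in `t` with slope `δ (qᵀΛx₀ + x₀ᵀΛq)`; being nonnegative for all `t`, the slope is zero, which
is (b) since `⟨Λ, abᵀ⟩ = bᵀΛa`.
-/

open Matrix

theorem eq_zero_of_forall_nonneg_add_mul {𝕜 : Type*} [Field 𝕜] [LinearOrder 𝕜]
    [IsStrictOrderedRing 𝕜] {a b : 𝕜} (h : ∀ t, 0 ≤ a + t * b) : b = 0 := by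
  by_contra hb
  have := h (-(a + 1) / b)
  rw [div_mul_cancel₀ _ hb] at this
  linarith

namespace Matrix

theorem trace_mul_vecMulVec {n R : Type*} [Fintype n] [CommSemiring R] (A : Matrix n n R)
    (a b : n → R) : (A * vecMulVec a b).trace = b ⬝ᵥ A *ᵥ a := by
  rw [mul_vecMulVec, trace_vecMulVec, dotProduct_comm]

theorem dotProduct_vecMulVec_self_add_smul_mulVec {n R : Type*} [Fintype n] [CommRing R]
    (x v : n → R) (Λ : Matrix n n R) (δ : R) :
    v ⬝ᵥ (vecMulVec x x + δ • Λ) *ᵥ v = (v ⬝ᵥ x) ^ 2 + δ * (v ⬝ᵥ Λ *ᵥ v) := by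
  rw [add_mulVec, vecMulVec_mulVec, op_smul_eq_smul, smul_mulVec, dotProduct_add,
    dotProduct_smul, dotProduct_smul, smul_eq_mul, smul_eq_mul, dotProduct_comm x v]
  ring

namespace PosSemidef

variable {n : Type*} [Fintype n] {x : n → ℝ} {Λ : Matrix n n ℝ} {δ : ℝ}

theorem sq_dotProduct_add_mul_nonneg (h : (vecMulVec x x + δ • Λ).PosSemidef) (v : n → ℝ) :
    0 ≤ (v ⬝ᵥ x) ^ 2 + δ * (v ⬝ᵥ Λ *ᵥ v) := by
  simpa [dotProduct_vecMulVec_self_add_smul_mulVec] using h.dotProduct_mulVec_nonneg v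

theorem dotProduct_mulVec_nonneg_of_orthogonal (h : (vecMulVec x x + δ • Λ).PosSemidef)
    (hδ : 0 < δ) {v : n → ℝ} (hv : v ⬝ᵥ x = 0) : 0 ≤ v ⬝ᵥ Λ *ᵥ v := by
  have := h.sq_dotProduct_add_mul_nonneg v
  rw [hv, zero_pow two_ne_zero, zero_add] at this
  exact nonneg_of_mul_nonneg_right this hδ

theorem dotProduct_mulVec_add_eq_zero_of_orthogonal (h : (vecMulVec x x + δ • Λ).PosSemidef)
    (hδ : δ ≠ 0) {q : n → ℝ} (hq : q ⬝ᵥ x = 0) (hqq : q ⬝ᵥ Λ *ᵥ q = 0) :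
    q ⬝ᵥ Λ *ᵥ x + x ⬝ᵥ Λ *ᵥ q = 0 := by
  have affine : ∀ t : ℝ, 0 ≤ ((x ⬝ᵥ x) ^ 2 + δ * (x ⬝ᵥ Λ *ᵥ x)) +
      t * (δ * (q ⬝ᵥ Λ *ᵥ x + x ⬝ᵥ Λ *ᵥ q)) := fun t => by
    have := h.sq_dotProduct_add_mul_nonneg (x + t • q)
    simp only [add_dotProduct, smul_dotProduct, mulVec_add, mulVec_smul, dotProduct_add,
      dotProduct_smul, hq, hqq, smul_eq_mul] at this
    linarith
  exact (mul_eq_zero.mp (eq_zero_of_forall_nonneg_add_mul affine)).resolve_left hδ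

end PosSemidef

end Matrix

theorem psd_perturbation_necessary_general {n : ℕ}
    (x₀ : Fin n → ℝ) (X₀ Λ : Matrix (Fin n) (Fin n) ℝ)
    (hX₀ : X₀ = vecMulVec x₀ x₀)
    (hpert : ∃ δ : ℝ, 0 < δ ∧ (X₀ + δ • Λ).PosSemidef) :
    (∀ v : Fin n → ℝ, v ⬝ᵥ x₀ = 0 → 0 ≤ v ⬝ᵥ Λ.mulVec v) ∧
    (∀ q : Fin n → ℝ, q ⬝ᵥ x₀ = 0 → (Λ * vecMulVec q q).trace = 0 →
      (Λ * (vecMulVec x₀ q + vecMulVec q x₀)).trace = 0) := by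
  obtain ⟨δ, hδ, hpsd⟩ := hpert
  subst hX₀
  refine ⟨fun v hv => hpsd.dotProduct_mulVec_nonneg_of_orthogonal hδ hv, fun q hq hqq => ?_⟩
  rw [trace_mul_vecMulVec] at hqq
  rw [Matrix.mul_add, trace_add, trace_mul_vecMulVec, trace_mul_vecMulVec]
  exact hpsd.dotProduct_mulVec_add_eq_zero_of_orthogonal hδ.ne' hq hqq

/-- **Lemma 4, necessity direction.** If `x₀x₀ᵀ + δΛ ⪰ 0` for some `δ > 0`, then
(a) the compression of `Λ` to `{x₀}ᗮ` is positive semidefinite, and (b) any `q ⊥ x₀`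
with `⟨Λ, qqᵀ⟩ = 0` satisfies `⟨Λ, x₀qᵀ + qx₀ᵀ⟩ = 0`. -/
theorem psd_perturbation_necessary {n : ℕ}
    (x₀ : Fin n → ℝ) (X₀ Λ : Matrix (Fin n) (Fin n) ℝ)
    (hX₀ : X₀ = vecMulVec x₀ x₀)
    (hΛ : Λ.IsSymm)
    (hpert : ∃ δ : ℝ, 0 < δ ∧ (X₀ + δ • Λ).PosSemidef) :
    (∀ v : Fin n → ℝ, v ⬝ᵥ x₀ = 0 → 0 ≤ v ⬝ᵥ Λ.mulVec v) ∧
    (∀ q : Fin n → ℝ, q ⬝ᵥ x₀ = 0 → (Λ * vecMulVec q q).trace = 0 →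
      (Λ * (vecMulVec x₀ q + vecMulVec q x₀)).trace = 0) :=
  psd_perturbation_necessary_general x₀ X₀ Λ hX₀ hpert
end

section
/- Let n = 2, X₀ = e₁e₁ᵀ, A₁ = e₂e₂ᵀ (the matrix with 1 in entry (2,2) and zeros elsewhere), and A₂ the all-ones 2×2 matrix, with constraints ⟨X, A₁⟩ = 0 and ⟨X, A₂⟩ = 1 and objective f(X) = ½‖X‖_F². Then there is no dual certificate at X₀: there exist no λ₁, λ₂ ∈ ℝ and symmetric 2×2 matrix Q with Q ⪯ 0, ⟨Q, X₀⟩ = 0, and λ₁A₁ + λ₂A₂ + Q = −X₀. (Here −X₀ is the unique element of −∂f(X₀), since ∂f(X₀) = {X₀} for f(X) = ½‖X‖_F².) -/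
/-!
The `(1,1)` entry of `λ₁A₁ + λ₂A₂ + Q = −X₀` reads `λ₂ + Q₁₁ = −1`, and `⟨Q, X₀⟩ = Q₁₁`, so
`λ₂ = −1` and then the `(1,2)` entry gives `Q₁₂ = 1`. But a semidefinite matrix with a zero
diagonal entry has the whole corresponding row zero (its `2 × 2` principal minors are `≥ 0`).
-/

open Matrix
open scoped ComplexOrder

theorem Matrix.PosSemidef.apply_eq_zero_of_diag_eq_zero {n 𝕜 : Type*} [Fintype n] [RCLike 𝕜]
    {M : Matrix n n 𝕜} (hM : M.PosSemidef) {i : n} (hi : M i i = 0) (j : n) : M i j = 0 := by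
  have hdet := (hM.submatrix ![i, j]).det_nonneg
  have hji : M j i = star (M i j) := by simpa using (hM.isHermitian.apply j i).symm
  simp only [det_fin_two, submatrix_apply, cons_val_zero, cons_val_one, hi, zero_mul, zero_sub,
    hji, RCLike.star_def, RCLike.mul_conj, neg_nonneg] at hdet
  have hnorm : ‖M i j‖ ^ 2 = 0 := by exact_mod_cast le_antisymm hdet (by positivity)
  simpa using hnorm

/-- **Example 1.** For `X₀ = e₁e₁ᵀ`, `A₁ = e₂e₂ᵀ`, `A₂` the all-ones matrix, and the
objective `f(X) = ½‖X‖_F²` (whose subdifferential at `X₀` is `{X₀}`), there is no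
dual certificate at `X₀`: no `(λ₁, λ₂, Q)` with `Q ⪯ 0`, `⟨Q, X₀⟩ = 0`, and
`λ₁A₁ + λ₂A₂ + Q = −X₀`. -/
theorem no_dual_certificate_example
    (X₀ A₁ A₂ : Matrix (Fin 2) (Fin 2) ℝ)
    (hX₀ : X₀ = !![1, 0; 0, 0])
    (hA₁ : A₁ = !![0, 0; 0, 1])
    (hA₂ : A₂ = !![1, 1; 1, 1]) :
    ¬ ∃ (l₁ l₂ : ℝ) (Q : Matrix (Fin 2) (Fin 2) ℝ),
      (-Q).PosSemidef ∧ (Q * X₀).trace = 0 ∧ l₁ • A₁ + l₂ • A₂ + Q = -X₀ := by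
  rintro ⟨l₁, l₂, Q, hQ, htr, heq⟩
  subst hX₀ hA₁ hA₂
  have h00 : Q 0 0 = 0 := by simpa [trace_fin_two, mul_apply, Fin.sum_univ_two] using htr
  have h01 : Q 0 1 = 0 := by
    simpa using hQ.apply_eq_zero_of_diag_eq_zero (i := 0) (by simp [h00]) 1
  have e00 := congrFun₂ heq 0 0
  have e01 := congrFun₂ heq 0 1
  simp [h00, h01] at e00 e01
  linarith
end

section
/- Let A₁,…,A_m be real symmetric n×n matrices, x₀ ∈ ℝⁿ, X₀ = x₀x₀ᵀ, bᵢ = ⟨X₀, Aᵢ⟩, and S = {Σᵢ λᵢAᵢ + Q : λ ∈ ℝ^m, Q ⪯ 0, ⟨Q, X₀⟩ = 0}. Let q ∈ ℝⁿ satisfy qᵀx₀ = 0 and qqᵀ ∈ S. Then every feasible X is orthogonal to qqᵀ: for all symmetric X with X ⪰ 0 and ⟨X, Aᵢ⟩ = bᵢ for all i, one has ⟨X, qqᵀ⟩ = 0. -/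
/-!
Write `qqᵀ = ∑ λᵢ Aᵢ + Q`. All feasible matrices pair identically with each `Aᵢ`, so
`⟨X, qqᵀ⟩ - ⟨X, Q⟩` is the same number for every feasible `X`; at `X₀` it is
`(qᵀx₀)² - ⟨X₀, Q⟩ = 0`. Hence `⟨X, qqᵀ⟩ = ⟨X, Q⟩`, which is `≥ 0` on the left
(`X ⪰ 0`, `qqᵀ ⪰ 0`) and `≤ 0` on the right (`X ⪰ 0`, `Q ⪯ 0`).
-/

open Matrix
open scoped ComplexOrder

namespace Matrix

variable {ι : Type*} [Fintype ι]

theorem PosSemidef.trace_mul_nonneg {𝕜 : Type*} [RCLike 𝕜] {X P : Matrix ι ι 𝕜}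
    (hX : X.PosSemidef) (hP : P.PosSemidef) : 0 ≤ (X * P).trace := by
  classical
  open scoped MatrixOrder in
  obtain ⟨B, rfl⟩ := CStarAlgebra.nonneg_iff_eq_star_mul_self.mp hP.nonneg
  rw [star_eq_conjTranspose, ← Matrix.mul_assoc, trace_mul_cycle]
  exact (hX.mul_mul_conjTranspose_same B).trace_nonneg

theorem trace_mul_sum_smul_add_sub_eq {κ R : Type*} [Fintype κ] [CommRing R]
    {X Y : Matrix ι ι R} (A : κ → Matrix ι ι R) (hXY : ∀ i, (X * A i).trace = (Y * A i).trace)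
    (lam : κ → R) (Q : Matrix ι ι R) :
    (X * (∑ i, lam i • A i + Q)).trace - (X * Q).trace =
      (Y * (∑ i, lam i • A i + Q)).trace - (Y * Q).trace := by
  simp [Matrix.mul_add, Matrix.mul_sum, trace_sum, hXY]

theorem trace_vecMulVec_mul_vecMulVec {R : Type*} [CommRing R] (u v w x : ι → R) :
    (vecMulVec u v * vecMulVec w x).trace = (v ⬝ᵥ w) * (u ⬝ᵥ x) := by
  rw [vecMulVec_mul_vecMulVec, trace_vecMulVec, dotProduct_smul, smul_eq_mul]

end Matrix

theorem feasible_orthogonal_of_mem_S_general {n m : ℕ}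
    (A : Fin m → Matrix (Fin n) (Fin n) ℝ)
    (x₀ : Fin n → ℝ) (X₀ : Matrix (Fin n) (Fin n) ℝ) (b : Fin m → ℝ)
    (S : Set (Matrix (Fin n) (Fin n) ℝ))
    (hX₀ : X₀ = vecMulVec x₀ x₀)
    (hb : ∀ i, b i = (X₀ * A i).trace)
    (hS : S = {Y : Matrix (Fin n) (Fin n) ℝ |
      ∃ (lam : Fin m → ℝ) (Q : Matrix (Fin n) (Fin n) ℝ),
        (-Q).PosSemidef ∧ (Q * X₀).trace = 0 ∧ Y = (∑ i, lam i • A i) + Q})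
    (q : Fin n → ℝ) (hq : q ⬝ᵥ x₀ = 0) (hqS : vecMulVec q q ∈ S) :
    ∀ X : Matrix (Fin n) (Fin n) ℝ, X.PosSemidef → (∀ i, (X * A i).trace = b i) →
      (X * vecMulVec q q).trace = 0 := by
  intro X hX hfeas
  obtain ⟨lam, Q, hQ, hQX₀, hqq⟩ := hS ▸ hqS
  have hshift := trace_mul_sum_smul_add_sub_eq A (fun i ↦ (hfeas i).trans (hb i)) lam Q
  rw [← hqq, trace_mul_comm X₀ Q, hQX₀, hX₀, trace_vecMulVec_mul_vecMulVec,
    dotProduct_comm x₀ q, hq, zero_mul] at hshift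
  have hqq_nonneg : 0 ≤ (X * vecMulVec q q).trace :=
    hX.trace_mul_nonneg (by simpa using posSemidef_vecMulVec_self_star q)
  have hQ_nonpos : (X * Q).trace ≤ 0 := by
    simpa [Matrix.mul_neg] using hX.trace_mul_nonneg hQ
  linarith

/-- If `q ⊥ x₀` and `qqᵀ ∈ S`, then every feasible `X` is orthogonal to `qqᵀ`
(the key step in the proofs of Theorem 5 and Lemma 1). -/
theorem feasible_orthogonal_of_mem_S {n m : ℕ}
    (A : Fin m → Matrix (Fin n) (Fin n) ℝ)
    (x₀ : Fin n → ℝ) (X₀ : Matrix (Fin n) (Fin n) ℝ) (b : Fin m → ℝ)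
    (S : Set (Matrix (Fin n) (Fin n) ℝ))
    (hX₀ : X₀ = vecMulVec x₀ x₀)
    (hb : ∀ i, b i = (X₀ * A i).trace)
    (hA : ∀ i, (A i).IsSymm)
    (hS : S = {Y : Matrix (Fin n) (Fin n) ℝ |
      ∃ (lam : Fin m → ℝ) (Q : Matrix (Fin n) (Fin n) ℝ),
        (-Q).PosSemidef ∧ (Q * X₀).trace = 0 ∧ Y = (∑ i, lam i • A i) + Q})
    (q : Fin n → ℝ) (hq : q ⬝ᵥ x₀ = 0) (hqS : vecMulVec q q ∈ S) :
    ∀ X : Matrix (Fin n) (Fin n) ℝ, X.PosSemidef → (∀ i, (X * A i).trace = b i) →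
      (X * vecMulVec q q).trace = 0 :=
  feasible_orthogonal_of_mem_S_general A x₀ X₀ b S hX₀ hb hS q hq hqS
end
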